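/- arXiv:1911.10263 — 4 statements merged into one kernel-verified Lean document; each statement's English description precedes it below -/
import Mathlib

section
/- Let g : ℝ → ℝ be continuous and L-periodic with L > 0. Then for any a < b, ∫_a^b g(x/ε) dx → (b - a)·⟨g⟩ as ε → 0⁺, where ⟨g⟩ = (1/L)∫_0^L g(t) dt. -/
open MeasureTheory Filter Topology

/-- Averaging of a continuous `L`-periodic function:
`∫_a^b g(x/ε) dx → (b-a)⟨g⟩` as `ε → 0⁺`, where `⟨g⟩ = (1/L)∫_0^L g`. -/
theorem stmt2 (g : ℝ → ℝ) (L : ℝ) (hL : 0 < L) (hcont : Continuous g)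
    (hper : ∀ x, g (x + L) = g x) (a b : ℝ) (hab : a < b) :
    Tendsto (fun ε : ℝ => ∫ x in a..b, g (x / ε)) (𝓝[>] 0)
      (𝓝 ((b - a) * ((1 / L) * ∫ t in (0:ℝ)..L, g t))) := by
  have hper' : Function.Periodic g L := hper
  have hint : ∀ t₁ t₂, IntervalIntegrable g volume t₁ t₂ := fun t₁ t₂ =>
    hcont.intervalIntegrable t₁ t₂
  set I : ℝ := ∫ t in (0:ℝ)..L, g t with hI
  -- uniform bound on |∫_0^y g - y * (I/L)|
  obtain ⟨C, hC⟩ : ∃ C : ℝ, ∀ y : ℝ, |(∫ t in (0:ℝ)..y, g t) - y * (I / L)| ≤ C := by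
    set s := sInf ((fun t => ∫ x in (0:ℝ)..t, g x) '' Set.Icc 0 L) with hs
    set S := sSup ((fun t => ∫ x in (0:ℝ)..t, g x) '' Set.Icc 0 L) with hS
    refine ⟨|s| + |S| + |I|, fun y => ?_⟩
    have h1 := hper'.sInf_add_zsmul_le_integral_of_pos (hint 0 L) hL y
    have h2 := hper'.integral_le_sSup_add_zsmul_of_pos (hint 0 L) hL y
    rw [zsmul_eq_mul, ← hs, ← hI] at h1
    rw [zsmul_eq_mul, ← hS, ← hI] at h2
    have hyL : y * (I / L) = (y / L) * I := by ring
    have hfr1 : (0:ℝ) ≤ y / L - (⌊y / L⌋ : ℝ) := by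
      have := Int.floor_le (y / L); linarith
    have hfr2 : y / L - (⌊y / L⌋ : ℝ) ≤ 1 := by
      have := Int.lt_floor_add_one (y / L); linarith
    have hd : |((⌊y / L⌋ : ℝ) - y / L) * I| ≤ |I| := by
      rw [abs_mul]
      have : |(⌊y / L⌋ : ℝ) - y / L| ≤ 1 := by
        rw [abs_sub_comm, abs_of_nonneg hfr1]; exact hfr2
      nlinarith [abs_nonneg I]
    have hdl := neg_abs_le (((⌊y / L⌋ : ℝ) - y / L) * I)
    have hdu := le_abs_self (((⌊y / L⌋ : ℝ) - y / L) * I)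
    have hsl := neg_abs_le s
    have hSu := le_abs_self S
    have hsplit : (∫ t in (0:ℝ)..y, g t) - y * (I / L)
        = ((∫ t in (0:ℝ)..y, g t) - (⌊y / L⌋ : ℝ) * I) + ((⌊y / L⌋ : ℝ) - y / L) * I := by
      ring
    rw [abs_le, hsplit]
    constructor
    · linarith [abs_nonneg s, abs_nonneg S]
    · linarith [abs_nonneg s, abs_nonneg S]
  -- rewrite the integral for ε > 0
  have key : ∀ ε : ℝ, 0 < ε →
      (∫ x in a..b, g (x / ε)) - (b - a) * ((1 / L) * I)
        = ε * ((∫ t in (0:ℝ)..(b / ε), g t) - (b / ε) * (I / L))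
          - ε * ((∫ t in (0:ℝ)..(a / ε), g t) - (a / ε) * (I / L)) := by
    intro ε hε
    have hε' : ε ≠ 0 := ne_of_gt hε
    rw [intervalIntegral.integral_comp_div (f := g) hε']
    rw [← intervalIntegral.integral_interval_sub_left (hint 0 (b / ε)) (hint 0 (a / ε))]
    have hb : ε * (b / ε) = b := by field_simp
    have ha : ε * (a / ε) = a := by field_simp
    have hL' : L ≠ 0 := ne_of_gt hL
    have : (b - a) * ((1 / L) * I) = ε * ((b / ε) * (I / L)) - ε * ((a / ε) * (I / L)) := by
      field_simp
    rw [this]; simp only [smul_eq_mul]; ring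
  -- squeeze
  have habs : Tendsto (fun ε : ℝ =>
      (∫ x in a..b, g (x / ε)) - (b - a) * ((1 / L) * I)) (𝓝[>] 0) (𝓝 0) := by
    have hlim : Tendsto (fun ε : ℝ => 2 * C * ε) (𝓝[>] 0) (𝓝 0) := by
      have : Tendsto (fun ε : ℝ => 2 * C * ε) (𝓝 0) (𝓝 (2 * C * 0)) :=
        (tendsto_id.const_mul (2 * C))
      simpa using this.mono_left nhdsWithin_le_nhds
    rw [tendsto_zero_iff_abs_tendsto_zero]
    apply squeeze_zero' (Eventually.of_forall fun ε => abs_nonneg _)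
      ?_ hlim
    filter_upwards [self_mem_nhdsWithin] with ε hε
    have hε : (0:ℝ) < ε := hε
    rw [key ε hε]
    calc |ε * ((∫ t in (0:ℝ)..(b / ε), g t) - (b / ε) * (I / L))
          - ε * ((∫ t in (0:ℝ)..(a / ε), g t) - (a / ε) * (I / L))|
        ≤ |ε * ((∫ t in (0:ℝ)..(b / ε), g t) - (b / ε) * (I / L))|
          + |ε * ((∫ t in (0:ℝ)..(a / ε), g t) - (a / ε) * (I / L))| := abs_sub _ _
      _ ≤ ε * C + ε * C := by
          gcongr ?_ + ?_ <;>
          · rw [abs_mul, abs_of_pos hε]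
            exact mul_le_mul_of_nonneg_left (hC _) hε.le
      _ = 2 * C * ε := by ring
  have := habs.add (tendsto_const_nhds (x := (b - a) * ((1 / L) * I)))
  simpa using this
end

section
/- Let h : ℝ → ℝ be continuous, L_h-periodic and positive, let γ > 0, and let f, φ : [0,1] → ℝ be continuous. Define the concentrated functional on the flat strip S^ε = {(x,y) : 0 < x < 1, 1 - ε^γ h(x/ε^β) < y < 1} (for ε small so that ε^γ max h < 1). Then (1/ε^γ)∫_{S^ε} f(x)φ(x) dx dy → ⟨h⟩_{(0,L_h)} ∫_0^1 f(x)φ(x) dx as ε → 0⁺. -/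
/-!
By Fubini the integral over the strip equals `ε^γ ∫₀¹ f φ h(·/ε^β)`, so the claim is the weak
convergence `h(·/δ) ⇀ ⟨h⟩` as `δ → 0⁺`, tested against the continuous function `f φ`.
Since `t ↦ ∫₀ᵗ h - t ⟨h⟩` is periodic, hence bounded, the primitives of `h(·/δ)` converge to
`x ↦ x ⟨h⟩` at rate `O(δ)`. Integrating by parts gives the weak convergence for polynomial test
functions, and Weierstrass approximation together with the uniform bound on `h(·/δ)` extends it
to all continuous ones.
-/

open MeasureTheory Set Filter Topology Polynomial

namespace Function.Periodic

variable {h : ℝ → ℝ} {T : ℝ}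

theorem primitive_sub_mul_average (hh : Periodic h T)
    (hint : ∀ a b, IntervalIntegrable h volume a b) :
    Periodic (fun t => (∫ s in 0..t, h s) - t * (T⁻¹ * ∫ s in 0..T, h s)) T := by
  intro t
  dsimp only
  rw [← intervalIntegral.integral_add_adjacent_intervals (hint 0 t) (hint t (t + T)),
    hh.intervalIntegral_add_eq t 0, zero_add]
  rcases eq_or_ne T 0 with rfl | hT
  · simp
  · field_simp
    ring

theorem exists_abs_intervalIntegral_comp_div_sub_le (hh : Periodic h T) (hT : 0 < T)
    (hc : Continuous h) :
    ∃ M, ∀ a b δ, 0 < δ →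
      |(∫ x in a..b, h (x / δ)) - (b - a) * (T⁻¹ * ∫ s in 0..T, h s)| ≤ M * δ := by
  set A := T⁻¹ * ∫ s in 0..T, h s
  have hint (a b : ℝ) : IntervalIntegrable h volume a b := hc.intervalIntegrable a b
  set H := fun t => (∫ s in 0..t, h s) - t * A
  have hHc : Continuous H := by fun_prop
  obtain ⟨M, hM⟩ := isBounded_iff_forall_norm_le.1
    ((hh.primitive_sub_mul_average hint).isBounded_of_continuous hT.ne' hHc)
  refine ⟨2 * M, fun a b δ hδ => ?_⟩
  have hH : (∫ x in a..b, h (x / δ)) - (b - a) * A = δ * (H (b / δ) - H (a / δ)) := by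
    rw [intervalIntegral.integral_comp_div h hδ.ne',
      ← intervalIntegral.integral_interval_sub_left (hint 0 _) (hint 0 _)]
    simp only [H, smul_eq_mul]
    field_simp
    ring
  have hb := hM _ (mem_range_self (b / δ))
  have ha := hM _ (mem_range_self (a / δ))
  rw [hH, abs_mul, abs_of_pos hδ]
  calc δ * |H (b / δ) - H (a / δ)| ≤ δ * (‖H (b / δ)‖ + ‖H (a / δ)‖) := by
        gcongr; exact abs_sub _ _
    _ ≤ 2 * M * δ := by nlinarith

theorem tendsto_intervalIntegral_comp_div (hh : Periodic h T) (hT : 0 < T) (hc : Continuous h)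
    (a b : ℝ) :
    Tendsto (fun δ => ∫ x in a..b, h (x / δ)) (𝓝[>] 0)
      (𝓝 ((b - a) * (T⁻¹ * ∫ s in 0..T, h s))) := by
  obtain ⟨M, hM⟩ := hh.exists_abs_intervalIntegral_comp_div_sub_le hT hc
  have hMδ : Tendsto (fun δ : ℝ => M * δ) (𝓝[>] 0) (𝓝 0) := by
    simpa using ((continuous_const_mul M).tendsto 0).mono_left nhdsWithin_le_nhds
  rw [tendsto_iff_norm_sub_tendsto_zero]
  refine squeeze_zero' (Eventually.of_forall fun _ => norm_nonneg _) ?_ hMδ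
  filter_upwards [self_mem_nhdsWithin] with δ hδ using hM a b δ hδ

end Function.Periodic

section WeakLimit

theorem tendsto_of_forall_approx {ι X : Type*} [PseudoMetricSpace X] {l : Filter ι}
    {F : ι → X} {a : X}
    (H : ∀ ε > 0, ∃ G : ι → X, ∃ b, Tendsto G l (𝓝 b) ∧
      (∀ᶠ i in l, dist (F i) (G i) ≤ ε) ∧ dist b a ≤ ε) :
    Tendsto F l (𝓝 a) := by
  rw [Metric.tendsto_nhds]
  intro ε hε
  obtain ⟨G, b, hG, hFG, hb⟩ := H (ε / 3) (by positivity)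
  filter_upwards [hFG, Metric.tendsto_nhds.1 hG (ε / 3) (by positivity)] with i hFGi hGi
  calc dist (F i) a ≤ dist (F i) (G i) + dist (G i) b + dist b a := dist_triangle4 _ _ _ _
    _ < ε := by linarith

variable {ι : Type*} {l : Filter ι} {u : ι → ℝ → ℝ} {a b A C : ℝ}

theorem intervalIntegral_mul_eq_sub_integral_deriv_mul_primitive {ψ ψ' v : ℝ → ℝ}
    (hψ : ∀ x, HasDerivAt ψ (ψ' x) x) (hψ' : Continuous ψ') (hv : Continuous v) :
    ∫ x in a..b, ψ x * v x
      = ψ b * (∫ t in a..b, v t) - ∫ x in a..b, ψ' x * ∫ t in a..x, v t := by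
  rw [intervalIntegral.integral_mul_deriv_eq_deriv_mul (fun x _ => hψ x)
    (fun x _ => (hv.integral_hasStrictDerivAt a x).hasDerivAt)
    (hψ'.intervalIntegrable a b) (hv.intervalIntegrable a b)]
  simp

theorem tendsto_intervalIntegral_mul_of_hasDerivAt [l.IsCountablyGenerated] (hab : a ≤ b)
    (hu : ∀ i, Continuous (u i)) (hC : ∀ i x, |u i x| ≤ C)
    (hlim : ∀ x ∈ Icc a b, Tendsto (fun i => ∫ t in a..x, u i t) l (𝓝 ((x - a) * A)))
    {ψ ψ' : ℝ → ℝ} (hψ : ∀ x, HasDerivAt ψ (ψ' x) x) (hψ' : Continuous ψ') :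
    Tendsto (fun i => ∫ x in a..b, ψ x * u i x) l (𝓝 (A * ∫ x in a..b, ψ x)) := by
  have hA : A * ∫ x in a..b, ψ x
      = ψ b * ((b - a) * A) - ∫ x in a..b, ψ' x * ((x - a) * A) := by
    rw [← intervalIntegral.integral_const_mul]
    simp_rw [mul_comm A]
    simpa using intervalIntegral_mul_eq_sub_integral_deriv_mul_primitive hψ hψ'
      (continuous_const (y := A))
  simp_rw [hA, intervalIntegral_mul_eq_sub_integral_deriv_mul_primitive hψ hψ' (hu _)]
  refine ((hlim b ⟨hab, le_rfl⟩).const_mul _).sub ?_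
  refine intervalIntegral.tendsto_integral_filter_of_dominated_convergence
    (fun x => |ψ' x| * (C * (b - a))) ?_ ?_
    (((continuous_abs.comp hψ').mul continuous_const).intervalIntegrable a b) ?_
  · refine Eventually.of_forall fun i => ?_
    exact (hψ'.mul (intervalIntegral.continuous_primitive
      (fun c d => (hu i).intervalIntegrable c d) a)).aestronglyMeasurable
  · refine Eventually.of_forall fun i => Eventually.of_forall fun x hx => ?_
    rw [uIoc_of_le hab] at hx
    rw [norm_mul, Real.norm_eq_abs]
    gcongr
    calc ‖∫ t in a..x, u i t‖ ≤ C * |x - a| :=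
          intervalIntegral.norm_integral_le_of_norm_le_const fun t _ => hC i t
      _ ≤ C * (b - a) := by
          gcongr
          · exact (abs_nonneg _).trans (hC i a)
          · rw [abs_of_nonneg (by linarith [hx.1])]; linarith [hx.2]
  · exact Eventually.of_forall fun x hx =>
      (hlim x (Ioc_subset_Icc_self (uIoc_of_le hab ▸ hx))).const_mul _

theorem abs_intervalIntegral_mul_sub_mul_le {g₁ g₂ w : ℝ → ℝ} {η K : ℝ} (hab : a ≤ b)
    (hg₁ : ContinuousOn g₁ (Icc a b)) (hg₂ : ContinuousOn g₂ (Icc a b)) (hw : Continuous w)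
    (hη : ∀ x ∈ Icc a b, |g₁ x - g₂ x| ≤ η) (hK : ∀ x, |w x| ≤ K) :
    |(∫ x in a..b, g₁ x * w x) - ∫ x in a..b, g₂ x * w x| ≤ η * K * (b - a) := by
  rw [← intervalIntegral.integral_sub (f := fun x : ℝ => g₁ x * w x) (g := fun x : ℝ => g₂ x * w x)
    ((hg₁.mul hw.continuousOn).intervalIntegrable_of_Icc hab)
    ((hg₂.mul hw.continuousOn).intervalIntegrable_of_Icc hab), ← abs_of_nonneg (sub_nonneg.2 hab)]
  simp_rw [← sub_mul]
  refine intervalIntegral.norm_integral_le_of_norm_le_const (E := ℝ) fun x hx => ?_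
  have hx' : x ∈ Icc a b := Ioc_subset_Icc_self (uIoc_of_le hab ▸ hx)
  rw [norm_mul, Real.norm_eq_abs, Real.norm_eq_abs]
  exact mul_le_mul (hη x hx') (hK x) (abs_nonneg _) ((abs_nonneg _).trans (hη x hx'))

theorem tendsto_intervalIntegral_mul_of_tendsto_primitive [l.IsCountablyGenerated] (hab : a ≤ b)
    (hu : ∀ i, Continuous (u i)) (hC : ∀ i x, |u i x| ≤ C)
    (hlim : ∀ x ∈ Icc a b, Tendsto (fun i => ∫ t in a..x, u i t) l (𝓝 ((x - a) * A)))
    {g : ℝ → ℝ} (hg : ContinuousOn g (Icc a b)) :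
    Tendsto (fun i => ∫ x in a..b, g x * u i x) l (𝓝 (A * ∫ x in a..b, g x)) := by
  refine tendsto_of_forall_approx fun ε hε => ?_
  have hden : 0 < (|C| + |A|) * (b - a) + 1 := by
    have := sub_nonneg.2 hab
    positivity
  set η := ε / ((|C| + |A|) * (b - a) + 1)
  have hη : 0 < η := div_pos hε hden
  have hηle (K : ℝ) (hK : |K| ≤ |C| + |A|) : η * |K| * (b - a) ≤ ε := by
    rw [div_mul_eq_mul_div, div_mul_eq_mul_div, div_le_iff₀ hden, mul_assoc]
    refine mul_le_mul_of_nonneg_left ?_ hε.le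
    nlinarith [mul_le_mul_of_nonneg_right hK (sub_nonneg.2 hab)]
  obtain ⟨p, hp⟩ := exists_polynomial_near_of_continuousOn a b g hg η hη
  have hpg (x : ℝ) (hx : x ∈ Icc a b) : |g x - eval x p| ≤ η := by
    rw [abs_sub_comm]; exact (hp x hx).le
  refine ⟨fun i => ∫ x in a..b, eval x p * u i x, A * ∫ x in a..b, eval x p,
    tendsto_intervalIntegral_mul_of_hasDerivAt hab hu hC hlim p.hasDerivAt
      (Polynomial.continuous _), Eventually.of_forall fun i => ?_, ?_⟩
  · rw [Real.dist_eq]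
    calc _ ≤ η * |C| * (b - a) :=
          abs_intervalIntegral_mul_sub_mul_le hab hg (Polynomial.continuousOn _) (hu i) hpg
            fun x => (hC i x).trans (le_abs_self C)
      _ ≤ ε := hηle C (by simp)
  · have hpgA := abs_intervalIntegral_mul_sub_mul_le (w := fun _ => A) (K := |A|) hab hg
      (Polynomial.continuousOn p) continuous_const hpg fun _ => le_rfl
    simp only [intervalIntegral.integral_mul_const] at hpgA
    rw [dist_comm, Real.dist_eq, mul_comm A, mul_comm A]
    calc _ ≤ η * |A| * (b - a) := by simpa only [abs_abs] using hpgA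
      _ ≤ ε := hηle A (by simp)

end WeakLimit

section RegionBetween

variable {α : Type*} {f g F : α → ℝ} {s : Set α}

theorem indicator_regionBetween_fst_apply (x : α) (y : ℝ) :
    (regionBetween f g s).indicator (fun p => F p.1) (x, y)
      = s.indicator (fun x => (Ioo (f x) (g x)).indicator (fun _ => F x) y) x := by
  by_cases hx : x ∈ s <;> simp [regionBetween, indicator, hx]

theorem integral_indicator_regionBetween_fst (hfg : ∀ x ∈ s, f x ≤ g x) (x : α) :
    ∫ y, (regionBetween f g s).indicator (fun p => F p.1) (x, y)
      = s.indicator (fun x => (g x - f x) * F x) x := by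
  simp_rw [indicator_regionBetween_fst_apply]
  by_cases hx : x ∈ s
  · simp only [indicator_of_mem hx]
    rw [integral_indicator_const _ measurableSet_Ioo, Real.volume_real_Ioo_of_le (hfg x hx),
      smul_eq_mul]
  · simp [hx]

variable [MeasurableSpace α] {μ : Measure α}

theorem setIntegral_regionBetween_fst [SFinite μ] (hf : Measurable f) (hg : Measurable g)
    (hs : MeasurableSet s) (hfg : ∀ x ∈ s, f x ≤ g x) (hF : Measurable F)
    (hint : IntegrableOn (fun x => (g x - f x) * F x) s μ) :
    ∫ p in regionBetween f g s, F p.1 ∂μ.prod volume = ∫ x in s, (g x - f x) * F x ∂μ := by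
  have hR := measurableSet_regionBetween hf hg hs
  have hmeas : AEStronglyMeasurable ((regionBetween f g s).indicator fun p => F p.1)
      (μ.prod volume) :=
    ((hF.comp measurable_fst).indicator hR).aestronglyMeasurable
  have hsection (x : α) :
      Integrable fun y => (regionBetween f g s).indicator (fun p => F p.1) (x, y) := by
    simp_rw [indicator_regionBetween_fst_apply]
    by_cases hx : x ∈ s
    · simp only [indicator_of_mem hx]
      exact (integrableOn_const measure_Ioo_lt_top.ne).integrable_indicator measurableSet_Ioo
    · simp [hx]
  have hnorm : IntegrableOn (fun x => (g x - f x) * ‖F x‖) s μ :=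
    IntegrableOn.congr_fun hint.norm (fun x hx => by
      rw [norm_mul, Real.norm_of_nonneg (sub_nonneg.2 (hfg x hx))]) hs
  have hprod : Integrable ((regionBetween f g s).indicator fun p => F p.1) (μ.prod volume) := by
    refine (integrable_prod_iff hmeas).2 ⟨Eventually.of_forall hsection, ?_⟩
    refine (hnorm.integrable_indicator hs).congr (Eventually.of_forall fun x => ?_)
    simp only [← integral_indicator_regionBetween_fst hfg]
    exact integral_congr_ae <|
      Eventually.of_forall fun y => (norm_indicator_eq_indicator_norm _ _).symm
  rw [← integral_indicator hR, integral_prod _ hprod]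
  simp_rw [integral_indicator_regionBetween_fst hfg]
  exact integral_indicator hs

end RegionBetween

theorem setIntegral_unitSquare_strip {c : ℝ} {r F : ℝ → ℝ} (hc : 0 ≤ c) (hr : Continuous r)
    (hr0 : ∀ x, 0 ≤ r x) (hF : ContinuousOn F (Icc 0 1)) :
    ∫ p in {p : ℝ × ℝ | 0 < p.1 ∧ p.1 < 1 ∧ 1 - c * r p.1 < p.2 ∧ p.2 < 1}, F p.1
      = c * ∫ x in (0:ℝ)..1, F x * r x := by
  have hS : {p : ℝ × ℝ | 0 < p.1 ∧ p.1 < 1 ∧ 1 - c * r p.1 < p.2 ∧ p.2 < 1}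
      = regionBetween (fun x => 1 - c * r x) (fun _ => 1) (Ioo 0 1) := by
    ext p
    simp only [regionBetween, mem_ofPred_eq, mem_Ioo]
    tauto
  obtain ⟨G, hGc, hG⟩ : ∃ G : ℝ → ℝ, Continuous G ∧ EqOn G F (Icc 0 1) :=
    ⟨IccExtend zero_le_one ((Icc 0 1).domRestrict F), hF.domRestrict.Icc_extend',
      fun x hx => IccExtend_of_mem _ _ hx⟩
  have hr1 : Measurable fun x => 1 - c * r x := by fun_prop
  have hint : IntegrableOn (fun x => c * r x * G x) (Ioo 0 1) :=
    (continuous_const.mul hr |>.mul hGc).integrableOn_Icc.mono_set Ioo_subset_Icc_self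
  rw [hS, setIntegral_congr_fun (measurableSet_regionBetween hr1 measurable_const measurableSet_Ioo)
      fun p hp => (hG (Ioo_subset_Icc_self hp.1)).symm,
    Measure.volume_eq_prod, setIntegral_regionBetween_fst hr1 measurable_const measurableSet_Ioo
      (fun x _ => by nlinarith [hr0 x]) hGc.measurable (by simpa using hint),
    intervalIntegral.integral_of_le zero_le_one, integral_Ioc_eq_integral_Ioo,
    ← integral_const_mul]
  refine setIntegral_congr_fun measurableSet_Ioo fun x hx => ?_
  rw [hG (Ioo_subset_Icc_self hx)]
  ring

theorem tendsto_rpow_nhdsGT_zero {β : ℝ} (hβ : 0 < β) :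
    Tendsto (fun x : ℝ => x ^ β) (𝓝[>] 0) (𝓝[>] 0) := by
  refine tendsto_nhdsWithin_iff.2 ⟨?_, eventually_nhdsWithin_of_forall fun x hx =>
    Real.rpow_pos_of_pos hx β⟩
  simpa [Real.zero_rpow hβ.ne'] using
    (Real.continuousAt_rpow_const 0 β (Or.inr hβ.le)).tendsto.mono_left nhdsWithin_le_nhds

theorem stmt4_general (h : ℝ → ℝ) (Lh : ℝ) (hLh : 0 < Lh)
    (hhc : Continuous h) (hhper : ∀ x, h (x + Lh) = h x) (hhpos : ∀ x, 0 < h x)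
    (γ β : ℝ) (hβ : 0 < β)
    (f φ : ℝ → ℝ) (hf : ContinuousOn f (Icc 0 1)) (hφ : ContinuousOn φ (Icc 0 1)) :
    Tendsto (fun ε : ℝ =>
        (1 / ε ^ γ) * ∫ p in {p : ℝ × ℝ | 0 < p.1 ∧ p.1 < 1 ∧
            1 - ε ^ γ * h (p.1 / ε ^ β) < p.2 ∧ p.2 < 1}, f p.1 * φ p.1)
      (𝓝[>] 0)
      (𝓝 (((1 / Lh) * ∫ t in (0:ℝ)..Lh, h t) * ∫ x in (0:ℝ)..1, f x * φ x)) := by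
  obtain ⟨C, hC⟩ := isBounded_iff_forall_norm_le.1
    (Function.Periodic.isBounded_of_continuous hhper hLh.ne' hhc)
  have hweak := tendsto_intervalIntegral_mul_of_tendsto_primitive (l := 𝓝[>] 0)
    (u := fun δ x => h (x / δ)) zero_le_one (fun δ => by fun_prop)
    (fun δ x => hC _ (mem_range_self _))
    (fun x _ => Function.Periodic.tendsto_intervalIntegral_comp_div hhper hLh hhc 0 x)
    (g := fun x => f x * φ x) (hf.mul hφ)
  rw [one_div Lh]
  refine (hweak.comp (tendsto_rpow_nhdsGT_zero hβ)).congr' ?_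
  filter_upwards [self_mem_nhdsWithin] with ε (hε : 0 < ε)
  have hεγ : 0 < ε ^ γ := Real.rpow_pos_of_pos hε γ
  rw [setIntegral_unitSquare_strip (r := fun x => h (x / ε ^ β)) (F := fun x => f x * φ x) hεγ.le
    (by fun_prop)
    (fun x => (hhpos _).le) (hf.mul hφ), one_div, inv_mul_cancel_left₀ hεγ.ne']
  rfl

/-- Convergence of concentrated integrals on the oscillating strip
`S^ε = {(x,y) : 0<x<1, 1 - ε^γ h(x/ε^β) < y < 1}`:
`(1/ε^γ)∫_{S^ε} f(x)φ(x) dxdy → ⟨h⟩ ∫_0^1 fφ` as `ε → 0⁺`. -/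
theorem stmt4 (h : ℝ → ℝ) (Lh h1 : ℝ) (hLh : 0 < Lh)
    (hhc : Continuous h) (hhper : ∀ x, h (x + Lh) = h x) (hhpos : ∀ x, 0 < h x)
    (hh1 : ∀ x, h x ≤ h1)
    (γ β : ℝ) (hγ : 0 < γ) (hβ : 0 < β)
    (f φ : ℝ → ℝ) (hf : ContinuousOn f (Icc 0 1)) (hφ : ContinuousOn φ (Icc 0 1)) :
    Tendsto (fun ε : ℝ =>
        (1 / ε ^ γ) * ∫ p in {p : ℝ × ℝ | 0 < p.1 ∧ p.1 < 1 ∧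
            1 - ε ^ γ * h (p.1 / ε ^ β) < p.2 ∧ p.2 < 1}, f p.1 * φ p.1)
      (𝓝[>] 0)
      (𝓝 (((1 / Lh) * ∫ t in (0:ℝ)..Lh, h t) * ∫ x in (0:ℝ)..1, f x * φ x)) :=
  stmt4_general h Lh hLh hhc hhper hhpos γ β hβ f φ hf hφ
end

section
/- Let 1 < p < 2. There exists a constant c_p > 0 such that for all x, y ∈ ℝⁿ, ⟨|x|^{p-2}x - |y|^{p-2}y, x - y⟩ ≥ c_p |x - y|² (|x| + |y|)^{p-2}, where the right-hand side is interpreted as 0 when x = y = 0. -/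
/-!
With `a = ‖x‖`, `b = ‖y‖` and `t = ⟪x, y⟫`, both sides are affine in `t ≤ a b`, and the
difference is nonincreasing in `t` because `a^(p-2) + b^(p-2) ≥ 2 (p-1) (a+b)^(p-2)`. So it
suffices to take `t = a b`, where the inequality becomes
`(p-1) (a-b)² (a+b)^(p-2) ≤ (a^(p-1) - b^(p-1)) (a-b)`, a consequence of the tangent-line
inequality for the concave function `s ↦ s^(p-1)`. This gives `c_p = p - 1`.
-/

namespace Real

theorem rpow_le_rpow_add_mul_rpow_sub_one_mul_sub {q a b : ℝ} (hq0 : 0 ≤ q) (hq1 : q ≤ 1)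
    (ha : 0 < a) (hb : 0 ≤ b) : b ^ q ≤ a ^ q + q * a ^ (q - 1) * (b - a) := by
  have bernoulli := rpow_one_add_le_one_add_mul_self (s := b / a - 1)
    (by linarith [div_nonneg hb ha.le]) hq0 hq1
  rw [add_sub_cancel, div_rpow hb ha.le, div_le_iff₀ (rpow_pos_of_pos ha q)] at bernoulli
  calc b ^ q ≤ (1 + q * (b / a - 1)) * a ^ q := bernoulli
    _ = a ^ q + q * (a ^ q / a) * (b - a) := by field_simp
    _ = a ^ q + q * a ^ (q - 1) * (b - a) := by rw [rpow_sub_one ha.ne']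

theorem mul_sub_sq_mul_add_rpow_le {q a b : ℝ} (hq0 : 0 ≤ q) (hq1 : q ≤ 1)
    (ha : 0 < a) (hb : 0 < b) :
    q * (a - b) ^ 2 * (a + b) ^ (q - 1) ≤ (a ^ q - b ^ q) * (a - b) := by
  wlog hba : b ≤ a generalizing a b
  · have := this hb ha (le_of_not_ge hba)
    rw [add_comm]
    nlinarith [this]
  have hsum : (a + b) ^ (q - 1) ≤ a ^ (q - 1) :=
    rpow_le_rpow_of_nonpos ha (by linarith) (by linarith)
  have tangent := rpow_le_rpow_add_mul_rpow_sub_one_mul_sub hq0 hq1 ha hb.le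
  have hab : 0 ≤ a - b := sub_nonneg.mpr hba
  nlinarith [mul_nonneg (mul_nonneg hq0 (mul_nonneg hab hab)) (sub_nonneg.mpr hsum)]

theorem sub_one_mul_add_sq_sub_mul_add_rpow_le {p a b t : ℝ} (hp1 : 1 < p) (hp2 : p ≤ 2)
    (ha : 0 < a) (hb : 0 < b) (ht : t ≤ a * b) :
    (p - 1) * (a ^ 2 + b ^ 2 - 2 * t) * (a + b) ^ (p - 2) ≤
      a ^ (p - 2) * a ^ 2 + b ^ (p - 2) * b ^ 2 - (a ^ (p - 2) + b ^ (p - 2)) * t := by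
  have slope : 2 * (p - 1) * (a + b) ^ (p - 2) ≤ a ^ (p - 2) + b ^ (p - 2) := by
    have hsa : (a + b) ^ (p - 2) ≤ a ^ (p - 2) :=
      rpow_le_rpow_of_nonpos ha (by linarith) (by linarith)
    have hsb : (a + b) ^ (p - 2) ≤ b ^ (p - 2) :=
      rpow_le_rpow_of_nonpos hb (by linarith) (by linarith)
    nlinarith [rpow_pos_of_pos (add_pos ha hb) (p - 2)]
  have diagonal := mul_sub_sq_mul_add_rpow_le (q := p - 1) (by linarith) (by linarith) ha hb
  rw [show p - 1 - 1 = p - 2 by ring, show p - 1 = p - 2 + 1 by ring,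
    rpow_add_one ha.ne', rpow_add_one hb.ne'] at diagonal
  nlinarith [mul_nonneg (sub_nonneg.mpr ht) (sub_nonneg.mpr slope)]

end Real

theorem sub_one_mul_norm_sub_sq_mul_norm_add_norm_rpow_le_inner {E : Type*}
    [NormedAddCommGroup E] [InnerProductSpace ℝ E] {p : ℝ} (hp1 : 1 < p) (hp2 : p ≤ 2)
    (x y : E) :
    (p - 1) * ‖x - y‖ ^ 2 * (‖x‖ + ‖y‖) ^ (p - 2) ≤
      inner ℝ (‖x‖ ^ (p - 2) • x - ‖y‖ ^ (p - 2) • y) (x - y) := by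
  have at_zero (z : E) : (p - 1) * ‖z‖ ^ 2 * ‖z‖ ^ (p - 2) ≤ inner ℝ (‖z‖ ^ (p - 2) • z) z := by
    rw [real_inner_smul_left, real_inner_self_eq_norm_sq]
    nlinarith [mul_nonneg (sq_nonneg ‖z‖) (Real.rpow_nonneg (norm_nonneg z) (p - 2))]
  rcases eq_or_ne x 0 with rfl | hx
  · simpa using at_zero y
  rcases eq_or_ne y 0 with rfl | hy
  · simpa using at_zero x
  rw [inner_sub_left, inner_sub_right, inner_sub_right, real_inner_smul_left, real_inner_smul_left,
    real_inner_smul_left, real_inner_smul_left, real_inner_self_eq_norm_sq,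
    real_inner_self_eq_norm_sq, real_inner_comm x y, norm_sub_sq_real]
  have := Real.sub_one_mul_add_sq_sub_mul_add_rpow_le hp1 hp2 (norm_pos_iff.mpr hx)
    (norm_pos_iff.mpr hy) (real_inner_le_norm x y)
  linarith

/-- Monotonicity of the p-Laplacian vector field for `1 < p < 2`:
`⟨|x|^{p-2}x - |y|^{p-2}y, x - y⟩ ≥ c_p |x-y|² (|x|+|y|)^{p-2}`. -/
theorem stmt7 (n : ℕ) (p : ℝ) (hp1 : 1 < p) (hp2 : p < 2) :
    ∃ c : ℝ, 0 < c ∧ ∀ x y : EuclideanSpace ℝ (Fin n),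
      c * ‖x - y‖ ^ 2 * (‖x‖ + ‖y‖) ^ (p - 2) ≤
        (inner ℝ (‖x‖ ^ (p - 2) • x - ‖y‖ ^ (p - 2) • y) (x - y) : ℝ) :=
  ⟨p - 1, sub_pos.mpr hp1, sub_one_mul_norm_sub_sq_mul_norm_add_norm_rpow_le_inner hp1 hp2.le⟩
end

section
/- Let g : ℝ → ℝ be continuous, L-periodic, with 0 < g_0 ≤ g ≤ g_1, and Y* = {(y₁,y₂) : 0 < y₁ < L, 0 < y₂ < g(y₁)}. For φ ∈ L¹(R^ε), where R^ε = {(x,y): 0<x<1, 0<y< ε g(x/ε^α)}, define the unfolding T_ε φ(x, y₁, y₂) = φ(ε^α [x/ε^α]_L L + ε^α y₁, ε y₂) for x ∈ I_ε and T_ε φ = 0 for x ∈ Λ_ε, where I_ε = (0, ε^α L(N_ε+1)) and Λ_ε = (0,1)\I_ε. Then (1/L) ∫_{(0,1)×Y*} T_ε φ(x,y₁,y₂) dx dy₁ dy₂ = (1/ε) ∫_{R^ε_0} φ(x,y) dx dy, where R^ε_0 = {(x,y) ∈ R^ε : x ∈ I_ε}. -/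
/-!
Write `a = ε^α` and `Y* = regionBetween 0 g (Ioo 0 L)`. On the cell `a L (k + (0,1))` the
unfolded function does not depend on `x`, so the left side is
`a ∑_{k ≤ N} ∫_{Y*} φ(a k L + a y₁, ε y₂)`. By `L`-periodicity of `g`, the affine map
`y ↦ (a k L + a y₁, ε y₂)`, of Jacobian `a ε`, carries `Y*` onto the part of `R^ε` lying over the
same cell, so the right side is the same sum. Cell boundaries are null sets, so open cells can be
used on both sides.
-/

open MeasureTheory Set Function

theorem Real.map_volume_add_mul (c : ℝ) {a : ℝ} (ha : a ≠ 0) :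
    Measure.map (fun x => c + a * x) volume = ENNReal.ofReal |a⁻¹| • volume := by
  rw [show (fun x => c + a * x) = (c + ·) ∘ (a * ·) from rfl,
    ← Measure.map_map (measurable_const_add c) (measurable_const_mul a),
    Real.map_volume_mul_left ha, Measure.map_smul, map_add_left_eq_self]

section AffineChange

variable {a b : ℝ} (c : ℝ)

theorem map_volume_affine_prod (ha : a ≠ 0) (hb : b ≠ 0) :
    Measure.map (fun y : ℝ × ℝ => (c + a * y.1, b * y.2)) volume
      = ENNReal.ofReal |(a * b)⁻¹| • volume := by
  have hprod : (fun y : ℝ × ℝ => (c + a * y.1, b * y.2))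
      = Prod.map (fun x => c + a * x) (fun x => 0 + b * x) := by
    ext y <;> simp
  rw [hprod, Measure.volume_eq_prod, ← Measure.map_prod_map _ _ (by fun_prop) (by fun_prop),
    Real.map_volume_add_mul c ha, Real.map_volume_add_mul 0 hb, Measure.prod_smul_left,
    Measure.prod_smul_right, smul_smul, ← ENNReal.ofReal_mul (abs_nonneg _), ← abs_mul, mul_inv]

theorem measurableEmbedding_affine_prod (ha : a ≠ 0) (hb : b ≠ 0) :
    MeasurableEmbedding fun y : ℝ × ℝ => (c + a * y.1, b * y.2) := by
  convert ((affineHomeomorph a c ha).prodCongr (affineHomeomorph b 0 hb)).measurableEmbedding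
    using 1
  ext y <;> simp [add_comm]

theorem integrableOn_comp_affine_prod_iff {E : Type*} [NormedAddCommGroup E] {f : ℝ × ℝ → E}
    (ha : a ≠ 0) (hb : b ≠ 0) {s : Set (ℝ × ℝ)} :
    IntegrableOn (fun y : ℝ × ℝ => f (c + a * y.1, b * y.2))
      ((fun y : ℝ × ℝ => (c + a * y.1, b * y.2)) ⁻¹' s) ↔ IntegrableOn f s := by
  rw [← comp_def, ← (measurableEmbedding_affine_prod c ha hb).integrableOn_map_iff,
    map_volume_affine_prod c ha hb, IntegrableOn, Measure.restrict_smul,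
    integrable_smul_measure (by simp [ha, hb]) ENNReal.ofReal_ne_top, IntegrableOn]

theorem setIntegral_comp_affine_prod {E : Type*} [NormedAddCommGroup E] [NormedSpace ℝ E]
    (f : ℝ × ℝ → E) (ha : a ≠ 0) (hb : b ≠ 0) (s : Set (ℝ × ℝ)) :
    ∫ y in (fun y : ℝ × ℝ => (c + a * y.1, b * y.2)) ⁻¹' s, f (c + a * y.1, b * y.2)
      = |(a * b)⁻¹| • ∫ p in s, f p := by
  rw [← (measurableEmbedding_affine_prod c ha hb).setIntegral_map, map_volume_affine_prod c ha hb,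
    Measure.restrict_smul, integral_smul_measure, ENNReal.toReal_ofReal (abs_nonneg _)]

end AffineChange

theorem Ioo_mul_subset_Ioo_mul_of_lt {c : ℝ} (hc : 0 ≤ c) {k n : ℕ} (hk : k < n) :
    Ioo (c * k) (c * (k + 1)) ⊆ Ioo 0 (c * n) :=
  Ioo_subset_Ioo (by positivity) (mul_le_mul_of_nonneg_left (by exact_mod_cast hk) hc)

theorem setIntegral_prod_ite_fst_mem {α β E : Type*} [MeasurableSpace α] [MeasurableSpace β]
    [NormedAddCommGroup E] [NormedSpace ℝ E] {μ : Measure (α × β)} {s t : Set α}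
    [DecidablePred (· ∈ t)] (hst : t ⊆ s) (ht : MeasurableSet t) (Y : Set β) (f : α × β → E) :
    ∫ q in s ×ˢ Y, (if q.1 ∈ t then f q else 0) ∂μ = ∫ q in t ×ˢ Y, f q ∂μ := by
  have hite : (fun q : α × β => if q.1 ∈ t then f q else 0) = (Prod.fst ⁻¹' t).indicator f := by
    funext q
    by_cases hq : q.1 ∈ t <;> simp [hq]
  have hset : s ×ˢ Y ∩ Prod.fst ⁻¹' t = t ×ˢ Y :=
    Set.ext fun q => ⟨fun h => ⟨h.2, h.1.2⟩, fun h => ⟨⟨hst h.1, h.2⟩, h.1⟩⟩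
  rw [hite, setIntegral_indicator (measurable_fst ht), hset]

section FstCells

variable {β E : Type*} [MeasurableSpace β] [NormedAddCommGroup E] {ν : Measure β}

theorem setIntegral_fst_preimage_Ioo_eq_sum [NormedSpace ℝ E] {x : ℕ → ℝ} (hx : Monotone x)
    (n : ℕ) {f : ℝ × β → E} {S : Set (ℝ × β)} (hS : MeasurableSet S)
    (hf : ∀ k ∈ Finset.range n,
      IntegrableOn f (Prod.fst ⁻¹' Ioo (x k) (x (k + 1)) ∩ S) (volume.prod ν)) :
    ∫ p in Prod.fst ⁻¹' Ioo (x 0) (x n) ∩ S, f p ∂(volume.prod ν)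
      = ∑ k ∈ Finset.range n,
          ∫ p in Prod.fst ⁻¹' Ioo (x k) (x (k + 1)) ∩ S, f p ∂(volume.prod ν) := by
  have hIoo_ae_Ioc : ∀ a b : ℝ, (Prod.fst ⁻¹' Ioo a b ∩ S : Set (ℝ × β))
      =ᵐ[volume.prod ν] (Prod.fst ⁻¹' Ioc a b ∩ S : Set _) := fun a b =>
    (Measure.quasiMeasurePreserving_fst.preimage_ae_eq Ioo_ae_eq_Ioc).inter (ae_eq_refl S)
  have hunion : Prod.fst ⁻¹' Ioc (x 0) (x n) ∩ S
      = ⋃ k ∈ Finset.range n, Prod.fst ⁻¹' Ioc (x k) (x (k + 1)) ∩ S := by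
    rw [← hx.biUnion_Ico_Ioc_map_succ 0 n, preimage_iUnion₂, iUnion₂_inter]
    simp [Order.succ_eq_add_one]
  rw [setIntegral_congr_set (hIoo_ae_Ioc _ _), hunion, integral_biUnion_finset]
  · exact Finset.sum_congr rfl fun k _ => setIntegral_congr_set (hIoo_ae_Ioc _ _).symm
  · exact fun k _ => (measurableSet_Ioc.preimage measurable_fst).inter hS
  · intro i _ j _ hij
    exact ((hx.pairwise_disjoint_on_Ioc_succ hij).preimage Prod.fst).inter_left S |>.inter_right S
  · exact fun k hk => (hf k hk).congr_set_ae (hIoo_ae_Ioc _ _).symm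

theorem floor_div_eq_of_mem_Ioo {c x : ℝ} (hc : 0 < c) {k : ℤ}
    (hx : x ∈ Ioo (c * k) (c * (k + 1))) : ⌊x / c⌋ = k := by
  rw [Int.floor_eq_iff, le_div_iff₀ hc, div_lt_iff₀ hc]
  constructor <;> linarith [hx.1, hx.2]

variable [SFinite ν]

theorem integrableOn_Ioo_prod_floor {G : ℤ → β → E} {c : ℝ} (hc : 0 < c) (k : ℤ) {Y : Set β}
    (hY : MeasurableSet Y) (hG : IntegrableOn (G k) Y ν) :
    IntegrableOn (fun q : ℝ × β => G ⌊q.1 / c⌋ q.2) (Ioo (c * k) (c * (k + 1)) ×ˢ Y)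
      (volume.prod ν) := by
  refine IntegrableOn.congr_fun ?_
    (fun q hq => by rw [floor_div_eq_of_mem_Ioo hc hq.1]) (measurableSet_Ioo.prod hY)
  rw [IntegrableOn, ← Measure.prod_restrict]
  exact hG.comp_snd _

theorem setIntegral_Ioo_prod_floor [NormedSpace ℝ E] (G : ℤ → β → E) {c : ℝ} (hc : 0 < c)
    (k : ℤ) {Y : Set β} (hY : MeasurableSet Y) :
    ∫ q in Ioo (c * k) (c * (k + 1)) ×ˢ Y, G ⌊q.1 / c⌋ q.2 ∂(volume.prod ν)
      = c • ∫ y in Y, G k y ∂ν := by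
  rw [setIntegral_congr_fun (measurableSet_Ioo.prod hY)
    (fun q hq => by rw [floor_div_eq_of_mem_Ioo hc hq.1]), ← Measure.prod_restrict,
    integral_fun_snd, measureReal_restrict_apply_univ, Real.volume_real_Ioo_of_le (by nlinarith)]
  congr 1
  ring

theorem setIntegral_Ioo_prod_floor_eq_sum [NormedSpace ℝ E] (G : ℤ → β → E) {c : ℝ}
    (hc : 0 < c) (n : ℕ) {Y : Set β} (hY : MeasurableSet Y)
    (hG : ∀ k ∈ Finset.range n, IntegrableOn (G k) Y ν) :
    ∫ q in Ioo 0 (c * n) ×ˢ Y, G ⌊q.1 / c⌋ q.2 ∂(volume.prod ν)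
      = c • ∑ k ∈ Finset.range n, ∫ y in Y, G k y ∂ν := by
  have hmono : Monotone fun k : ℕ => c * k := fun i j hij =>
    mul_le_mul_of_nonneg_left (Nat.cast_le.mpr hij) hc.le
  have hsplit := setIntegral_fst_preimage_Ioo_eq_sum hmono n (measurable_snd hY)
    (f := fun q : ℝ × β => G ⌊q.1 / c⌋ q.2) fun k _ => by
      simpa [← prod_eq] using integrableOn_Ioo_prod_floor hc k hY (hG k ‹_›)
  simp only [Nat.cast_zero, mul_zero, Nat.cast_add_one, ← prod_eq] at hsplit
  rw [hsplit, Finset.smul_sum]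
  refine Finset.sum_congr rfl fun k _ => ?_
  simpa using setIntegral_Ioo_prod_floor G hc k hY (ν := ν)

end FstCells

theorem regionBetween_mono {α : Type*} {f g : α → ℝ} {s t : Set α} (h : s ⊆ t) :
    regionBetween f g s ⊆ regionBetween f g t :=
  fun _ hp => ⟨h hp.1, hp.2⟩

theorem regionBetween_eq_fst_preimage_inter {α : Type*} (f g : α → ℝ) (s : Set α) :
    regionBetween f g s = Prod.fst ⁻¹' s ∩ regionBetween f g univ := by
  ext p
  simp [regionBetween]

section PeriodicProfile

variable {g : ℝ → ℝ} {L a b : ℝ}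

theorem preimage_affine_regionBetween_periodic (hg : Periodic g L) (ha : 0 < a) (hb : 0 < b)
    (k : ℕ) :
    (fun y : ℝ × ℝ => (a * k * L + a * y.1, b * y.2)) ⁻¹'
        regionBetween 0 (fun x => b * g (x / a)) (Ioo (a * L * k) (a * L * (k + 1)))
      = regionBetween 0 g (Ioo 0 L) := by
  ext y
  have hshift : (a * k * L + a * y.1) / a = y.1 + k * L := by field_simp; ring
  simp only [regionBetween, mem_preimage, mem_Ioo, Pi.zero_apply, mem_ofPred_eq, hshift,
    hg.nat_mul k y.1]
  refine and_congr ⟨fun h => ⟨?_, ?_⟩, fun h => ⟨?_, ?_⟩⟩ ⟨fun h => ⟨?_, ?_⟩, fun h => ⟨?_, ?_⟩⟩ <;>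
    nlinarith [h.1, h.2]

variable {E : Type*} [NormedAddCommGroup E]

theorem integrableOn_regionBetween_periodic_cell_iff {φ : ℝ × ℝ → E} (hg : Periodic g L)
    (ha : 0 < a) (hb : 0 < b) (k : ℕ) :
    IntegrableOn (fun y : ℝ × ℝ => φ (a * k * L + a * y.1, b * y.2))
        (regionBetween 0 g (Ioo 0 L)) ↔ IntegrableOn φ
          (regionBetween 0 (fun x => b * g (x / a)) (Ioo (a * L * k) (a * L * (k + 1)))) := by
  rw [← preimage_affine_regionBetween_periodic hg ha hb k]
  exact integrableOn_comp_affine_prod_iff _ ha.ne' hb.ne'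

theorem setIntegral_regionBetween_periodic_cell [NormedSpace ℝ E] (φ : ℝ × ℝ → E)
    (hg : Periodic g L) (ha : 0 < a) (hb : 0 < b) (k : ℕ) :
    ∫ p in regionBetween 0 (fun x => b * g (x / a)) (Ioo (a * L * k) (a * L * (k + 1))), φ p
      = (a * b) • ∫ y in regionBetween 0 g (Ioo 0 L), φ (a * k * L + a * y.1, b * y.2) := by
  rw [← preimage_affine_regionBetween_periodic hg ha hb k,
    setIntegral_comp_affine_prod _ φ ha.ne' hb.ne', smul_smul, abs_of_pos (by positivity),
    mul_inv_cancel₀ (by positivity), one_smul]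

theorem setIntegral_regionBetween_periodic_eq_sum [NormedSpace ℝ E] {φ : ℝ × ℝ → E}
    (hg : Periodic g L) (hgm : Measurable g) (hL : 0 ≤ L) (ha : 0 < a) (hb : 0 < b) (n : ℕ)
    (hφ : IntegrableOn φ (regionBetween 0 (fun x => b * g (x / a)) (Ioo 0 (a * L * n)))) :
    ∫ p in regionBetween 0 (fun x => b * g (x / a)) (Ioo 0 (a * L * n)), φ p
      = (a * b) • ∑ k ∈ Finset.range n,
          ∫ y in regionBetween 0 g (Ioo 0 L), φ (a * k * L + a * y.1, b * y.2) := by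
  have hmono : Monotone fun k : ℕ => a * L * k := fun i j hij =>
    mul_le_mul_of_nonneg_left (Nat.cast_le.mpr hij) (by positivity)
  have hS : MeasurableSet (regionBetween 0 (fun x => b * g (x / a)) univ) :=
    measurableSet_regionBetween measurable_const (by fun_prop) MeasurableSet.univ
  have hsplit := setIntegral_fst_preimage_Ioo_eq_sum hmono n hS (f := φ) (ν := volume)
    fun k hk => by
      rw [← regionBetween_eq_fst_preimage_inter, Nat.cast_add_one]
      exact hφ.mono_set <| regionBetween_mono <|
        Ioo_mul_subset_Ioo_mul_of_lt (c := a * L) (by positivity) (Finset.mem_range.mp hk)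
  simp only [Nat.cast_zero, mul_zero, Nat.cast_add_one, ← regionBetween_eq_fst_preimage_inter,
    ← Measure.volume_eq_prod] at hsplit
  rw [hsplit, Finset.smul_sum]
  exact Finset.sum_congr rfl fun k _ => setIntegral_regionBetween_periodic_cell φ hg ha hb k

end PeriodicProfile

theorem stmt12_general (g : ℝ → ℝ) (L : ℝ) (hL : 0 < L)
    (hgc : Continuous g) (hgper : ∀ x, g (x + L) = g x)
    (α ε : ℝ) (hε : 0 < ε)
    (N : ℕ) (hN : ε ^ α * L * (N + 1) ≤ 1)
    (φ : ℝ × ℝ → ℝ)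
    (hφ : IntegrableOn φ
      {p : ℝ × ℝ | 0 < p.1 ∧ p.1 < 1 ∧ 0 < p.2 ∧ p.2 < ε * g (p.1 / ε ^ α)}) :
    (1 / L) * (∫ q in {q : ℝ × ℝ × ℝ |
        q.1 ∈ Ioo (0:ℝ) 1 ∧ 0 < q.2.1 ∧ q.2.1 < L ∧ 0 < q.2.2 ∧ q.2.2 < g q.2.1},
        if q.1 ∈ Ioo (0:ℝ) (ε ^ α * L * (N + 1)) then
          φ (ε ^ α * (⌊q.1 / ε ^ α / L⌋ : ℝ) * L + ε ^ α * q.2.1, ε * q.2.2)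
        else 0)
      = (1 / ε) * ∫ p in {p : ℝ × ℝ |
          p.1 ∈ Ioo (0:ℝ) (ε ^ α * L * (N + 1)) ∧
          0 < p.2 ∧ p.2 < ε * g (p.1 / ε ^ α)}, φ p := by
  have ha : 0 < ε ^ α := Real.rpow_pos_of_pos hε α
  have hYmeas : MeasurableSet (regionBetween 0 g (Ioo 0 L)) :=
    measurableSet_regionBetween measurable_const hgc.measurable measurableSet_Ioo
  have hY : {q : ℝ × ℝ × ℝ |
        q.1 ∈ Ioo (0:ℝ) 1 ∧ 0 < q.2.1 ∧ q.2.1 < L ∧ 0 < q.2.2 ∧ q.2.2 < g q.2.1}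
      = Ioo 0 1 ×ˢ regionBetween 0 g (Ioo 0 L) := by
    ext q
    simp [regionBetween, and_assoc]
  have hR0 : IntegrableOn φ
      (regionBetween 0 (fun x => ε * g (x / ε ^ α)) (Ioo 0 (ε ^ α * L * (N + 1 : ℕ)))) :=
    hφ.mono_set fun p hp => ⟨hp.1.1, hp.1.2.trans_le (by exact_mod_cast hN), hp.2.1, hp.2.2⟩
  have hcells : ∀ k ∈ Finset.range (N + 1), IntegrableOn
      (fun y : ℝ × ℝ => φ (ε ^ α * (k : ℤ) * L + ε ^ α * y.1, ε * y.2))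
      (regionBetween 0 g (Ioo 0 L)) :=
    fun k hk => by
      simpa using (integrableOn_regionBetween_periodic_cell_iff hgper ha hε k).2 <| hR0.mono_set <|
        regionBetween_mono <| Ioo_mul_subset_Ioo_mul_of_lt (c := ε ^ α * L) (by positivity)
          (Finset.mem_range.mp hk)
  have hlhs := setIntegral_Ioo_prod_floor_eq_sum
    (fun m y => φ (ε ^ α * m * L + ε ^ α * y.1, ε * y.2)) (c := ε ^ α * L) (by positivity)
    (N + 1) hYmeas hcells
  have hrhs :=
    setIntegral_regionBetween_periodic_eq_sum hgper hgc.measurable hL.le ha hε (N + 1) hR0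
  push_cast at hlhs hrhs
  rw [← Measure.volume_eq_prod] at hlhs
  rw [hY, setIntegral_prod_ite_fst_mem (Ioo_subset_Ioo_right hN) measurableSet_Ioo]
  have hR : {p : ℝ × ℝ |
        p.1 ∈ Ioo (0:ℝ) (ε ^ α * L * (N + 1)) ∧ 0 < p.2 ∧ p.2 < ε * g (p.1 / ε ^ α)}
      = regionBetween 0 (fun x => ε * g (x / ε ^ α)) (Ioo 0 (ε ^ α * L * (N + 1))) := rfl
  simp only [div_div]
  rw [hlhs, hR, hrhs]
  simp only [smul_eq_mul]
  field_simp

/-- Exact integration identity for the thin-domain unfolding operator: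
`(1/L) ∫_{(0,1)×Y*} T_ε φ = (1/ε) ∫_{R^ε_0} φ`. -/
theorem stmt12 (g : ℝ → ℝ) (L g0 g1 : ℝ) (hL : 0 < L)
    (hgc : Continuous g) (hgper : ∀ x, g (x + L) = g x)
    (hg0 : 0 < g0) (hg : ∀ x, g0 ≤ g x ∧ g x ≤ g1)
    (α ε : ℝ) (hα : 0 < α) (hε : 0 < ε)
    (N : ℕ) (hN : ε ^ α * L * (N + 1) ≤ 1)
    (hNmax : ∀ m : ℕ, ε ^ α * L * (m + 1) ≤ 1 → m ≤ N)
    (φ : ℝ × ℝ → ℝ)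
    (hφ : IntegrableOn φ
      {p : ℝ × ℝ | 0 < p.1 ∧ p.1 < 1 ∧ 0 < p.2 ∧ p.2 < ε * g (p.1 / ε ^ α)}) :
    (1 / L) * (∫ q in {q : ℝ × ℝ × ℝ |
        q.1 ∈ Ioo (0:ℝ) 1 ∧ 0 < q.2.1 ∧ q.2.1 < L ∧ 0 < q.2.2 ∧ q.2.2 < g q.2.1},
        if q.1 ∈ Ioo (0:ℝ) (ε ^ α * L * (N + 1)) then
          φ (ε ^ α * (⌊q.1 / ε ^ α / L⌋ : ℝ) * L + ε ^ α * q.2.1, ε * q.2.2)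
        else 0)
      = (1 / ε) * ∫ p in {p : ℝ × ℝ |
          p.1 ∈ Ioo (0:ℝ) (ε ^ α * L * (N + 1)) ∧
          0 < p.2 ∧ p.2 < ε * g (p.1 / ε ^ α)}, φ p :=
  stmt12_general g L hL hgc hgper α ε hε N hN φ hφ
end
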